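/- Thompson's group F embeds into the Brown–Thompson group F₃ via the homomorphism determined on generators by x₀ ↦ y₀ and x₁ ↦ y₂; in particular this assignment extends to a well-defined injective group homomorphism F → F₃. -/

import Mathlib

open scoped commutatorElement

/-- The defining relations of Thompson's group `F` on generators `x₀, x₁`:
`[x₀x₁⁻¹, x₀⁻¹x₁x₀]` and `[x₀x₁⁻¹, x₀⁻²x₁x₀²]`. -/
def relsF : Set (FreeGroup (Fin 2)) :=
  let a : FreeGroup (Fin 2) := FreeGroup.of 0
  let b : FreeGroup (Fin 2) := FreeGroup.of 1
  {⁅a * b⁻¹, a⁻¹ * b * a⁆, ⁅a * b⁻¹, a⁻¹ * a⁻¹ * b * a * a⁆}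

/-- The defining relations of the Brown–Thompson group `F₃` on generators
`y₀, y₁, y₂, …`: `yₙyₘ = yₘy_{n+2}` for all `m < n`. -/
def relsF3 : Set (FreeGroup ℕ) :=
  {r | ∃ m n : ℕ, m < n ∧
    r = (FreeGroup.of n * FreeGroup.of m) *
        (FreeGroup.of m * FreeGroup.of (n + 2))⁻¹}

/-!
For `m < n` the generators `xₙ = x₀^{-(n-1)} x₁ x₀^{n-1}` of `F` satisfy `xₙ xₘ = xₘ xₙ₊₁`: the two
defining commutators spread to all of these relations under conjugation by `x₀`. Conversely the
`y₂ₙ` satisfy them in `F₃`, so `x₀ ↦ y₀`, `x₁ ↦ y₂` defines a homomorphism with `xₙ ↦ y₂ₙ`.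

Positive words in the `yₙ` have unique normal forms `y_{i₁} ⋯ y_{iₖ}`, `i₁ ≤ ⋯ ≤ iₖ`. The monoid of
these normal forms is cancellative and any two elements have a common right multiple, so it embeds
in its group of fractions. That embedding factors through `F₃`, hence positive words with equal
value in `F₃` have equal normal forms. The same Ore property writes every element of `F` as
`p q⁻¹` with `p`, `q` positive words, and doubling indices is injective on normal forms.
-/

open MulOpposite OreLocalization

noncomputable abbrev OreLocalization.oreSetTop {R : Type*} [Monoid R] [IsRightCancelMul R]
    (h : ∀ r s : R, ∃ r' s', s' * r = r' * s) : OreSet (⊤ : Submonoid R) where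
  ore_right_cancel _ _ _ hs := ⟨1, by rw [mul_right_cancel hs]⟩
  oreNum r s := (h r s).choose
  oreDenom r s := ⟨(h r s).choose_spec.choose, Submonoid.mem_top _⟩
  ore_eq r s := (h r s).choose_spec.choose_spec

lemma OreLocalization.numeratorHom_injective {R : Type*} [Monoid R] [IsLeftCancelMul R]
    (S : Submonoid R) [OreSet S] : Function.Injective (numeratorHom : R →* R[S⁻¹]) := by
  intro a b h
  obtain ⟨u, v, hvu, huv⟩ := oreDiv_eq_iff.mp h
  simp only [OneMemClass.coe_one, mul_one] at huv
  rw [Submonoid.smul_def, smul_eq_mul, smul_eq_mul, huv] at hvu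
  exact (mul_left_cancel hvu).symm

lemma exists_eq_mul_inv_of_mem_closure {M G : Type*} [Monoid M] [Group G] (f : M →* G)
    (hM : ∀ a b : M, ∃ c e, a * c = b * e) {g : G} (hg : g ∈ Subgroup.closure (Set.range f)) :
    ∃ a b, g = f a * (f b)⁻¹ := by
  induction hg using Subgroup.closure_induction_right with
  | one => exact ⟨1, 1, by simp⟩
  | mul_right g _ _ hs ih =>
    obtain ⟨s, rfl⟩ := hs
    obtain ⟨a, b, rfl⟩ := ih
    obtain ⟨c, e, hce⟩ := hM b s
    refine ⟨a * c, e, ?_⟩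
    have hs : f s = f b * f c * (f e)⁻¹ := by rw [← map_mul, hce, map_mul, mul_inv_cancel_right]
    rw [hs, map_mul]
    group
  | mul_inv_cancel g _ _ hs ih =>
    obtain ⟨s, rfl⟩ := hs
    obtain ⟨a, b, rfl⟩ := ih
    exact ⟨a, s * b, by rw [map_mul, mul_inv_rev, mul_assoc]⟩

lemma MonoidHom.injective_of_injective_comp {M G H : Type*} [Monoid M] [Group G] [Group H]
    {f : M →* G} (hM : ∀ a b : M, ∃ c e, a * c = b * e)
    (hf : Subgroup.closure (Set.range f) = ⊤) (φ : G →* H) (hφ : Function.Injective (φ.comp f)) :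
    Function.Injective φ := by
  refine (injective_iff_map_eq_one φ).mpr fun g hg => ?_
  obtain ⟨a, b, rfl⟩ := exists_eq_mul_inv_of_mem_closure f hM (hf ▸ Subgroup.mem_top g)
  rw [map_mul, map_inv, mul_inv_eq_one] at hg
  rw [hφ hg, mul_inv_cancel]

lemma conj_eq_of_commute_mul_inv {G : Type*} [Group G] {a y g : G} (h : Commute (a * y⁻¹) g) :
    y⁻¹ * g * y = a⁻¹ * g * a :=
  calc y⁻¹ * g * y = a⁻¹ * (a * y⁻¹ * g) * y := by group
    _ = a⁻¹ * (g * (a * y⁻¹)) * y := by rw [h.eq]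
    _ = a⁻¹ * g * a := by group

/-- For `d = 1` these are the relations of `F` in the generators `xₙ`, for `d = 2` the defining
relations of `F₃`. -/
def IsThompsonFamily {M : Type*} [Monoid M] (d : ℕ) (x : ℕ → M) : Prop :=
  ∀ ⦃m n : ℕ⦄, m < n → x n * x m = x m * x (n + d)

lemma IsThompsonFamily.map {M N F : Type*} [Monoid M] [Monoid N] [FunLike F M N]
    [MonoidHomClass F M N] {d : ℕ} {x : ℕ → M} (hx : IsThompsonFamily d x) (f : F) :
    IsThompsonFamily d (f ∘ x) := fun m n h => by
  simp only [Function.comp_apply, ← map_mul, hx h]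

section ThompsonFamily

variable {G : Type*} [Group G]

def thompsonFamily (a b : G) : ℕ → G
  | 0 => a
  | n + 1 => (a ^ n)⁻¹ * b * a ^ n

lemma conj_thompsonFamily (a b : G) (n : ℕ) :
    a⁻¹ * thompsonFamily a b (n + 1) * a = thompsonFamily a b (n + 2) := by
  simp only [thompsonFamily, pow_succ]
  group

lemma map_thompsonFamily {H : Type*} [Group H] (f : G →* H) (a b : G) (n : ℕ) :
    f (thompsonFamily a b n) = thompsonFamily (f a) (f b) n := by
  cases n <;> simp [thompsonFamily]

lemma IsThompsonFamily.thompsonFamily_eq {x : ℕ → G} (hx : IsThompsonFamily 1 x) :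
    thompsonFamily (x 0) (x 1) = x := by
  funext n
  induction n with
  | zero => rfl
  | succ n ih =>
    cases n with
    | zero => simp [thompsonFamily]
    | succ n => rw [← conj_thompsonFamily, ih, mul_assoc, hx n.succ_pos, inv_mul_cancel_left]

lemma IsThompsonFamily.commute_mul_inv {x : ℕ → G} (hx : IsThompsonFamily 1 x) {n : ℕ}
    (hn : 2 ≤ n) : Commute (x 0 * (x 1)⁻¹) (x n) := by
  have h₁ : (x 1)⁻¹ * x n = x (n + 1) * (x 1)⁻¹ := by
    rw [inv_mul_eq_iff_eq_mul, ← mul_assoc, ← hx (by omega : 1 < n), mul_inv_cancel_right]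
  change x 0 * (x 1)⁻¹ * x n = x n * (x 0 * (x 1)⁻¹)
  rw [mul_assoc, h₁, ← mul_assoc, ← hx (by omega : 0 < n), mul_assoc]

lemma commute_thompsonFamily_near {a b : G} (h₂ : Commute (a * b⁻¹) (a⁻¹ * b * a))
    (h₃ : Commute (a * b⁻¹) (a⁻¹ * a⁻¹ * b * a * a)) (m : ℕ) :
    Commute (a * (thompsonFamily a b (m + 1))⁻¹) (thompsonFamily a b (m + 2)) ∧
      Commute (a * (thompsonFamily a b (m + 1))⁻¹) (thompsonFamily a b (m + 3)) := by
  induction m with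
  | zero =>
    have hx₃ : thompsonFamily a b 3 = a⁻¹ * a⁻¹ * b * a * a := by
      simp [thompsonFamily, pow_two, mul_assoc]
    have hx₁ : thompsonFamily a b 1 = b := by simp [thompsonFamily]
    refine ⟨by simpa [thompsonFamily] using h₂, ?_⟩
    rwa [zero_add, zero_add, hx₁, hx₃]
  | succ m ih =>
    have hπ : a⁻¹ * (a * (thompsonFamily a b (m + 1))⁻¹) * a =
        a * (thompsonFamily a b (m + 2))⁻¹ := by
      rw [← conj_thompsonFamily]
      group
    have step (n : ℕ)
        (hn : Commute (a * (thompsonFamily a b (m + 1))⁻¹) (thompsonFamily a b (n + 1))) :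
        Commute (a * (thompsonFamily a b (m + 2))⁻¹) (thompsonFamily a b (n + 2)) := by
      simpa only [inv_inv, hπ, conj_thompsonFamily] using hn.conj a⁻¹
    exact ⟨step _ ih.1, step _ ih.2⟩

lemma commute_thompsonFamily {a b : G} (h₂ : Commute (a * b⁻¹) (a⁻¹ * b * a))
    (h₃ : Commute (a * b⁻¹) (a⁻¹ * a⁻¹ * b * a * a)) (n : ℕ) :
    ∀ m, m + 2 ≤ n → Commute (a * (thompsonFamily a b (m + 1))⁻¹) (thompsonFamily a b n) := by
  induction n using Nat.strong_induction_on with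
  | _ n ih =>
  intro m hmn
  have near := commute_thompsonFamily_near h₂ h₃ m
  obtain rfl | rfl | hn := (show n = m + 2 ∨ n = m + 3 ∨ m + 4 ≤ n by omega)
  · exact near.1
  · exact near.2
  obtain ⟨j, rfl⟩ : ∃ j, n = j + 2 := ⟨n - 2, by omega⟩
  -- `x_{j+2} = x_{m+2}⁻¹ x_{j+1} x_{m+2}`, a product of elements commuting with `a x_{m+1}⁻¹`
  have hconj : (thompsonFamily a b (m + 2))⁻¹ * thompsonFamily a b (j + 1) *
      thompsonFamily a b (m + 2) = thompsonFamily a b (j + 2) := by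
    rw [conj_eq_of_commute_mul_inv (ih (j + 1) (by omega) (m + 1) (by omega)),
      conj_thompsonFamily]
  rw [← hconj]
  exact (near.1.inv_right.mul_right (ih (j + 1) (by omega) m (by omega))).mul_right near.1

lemma isThompsonFamily_thompsonFamily {a b : G} (h₂ : Commute (a * b⁻¹) (a⁻¹ * b * a))
    (h₃ : Commute (a * b⁻¹) (a⁻¹ * a⁻¹ * b * a * a)) : IsThompsonFamily 1 (thompsonFamily a b) := by
  intro m n hmn
  obtain ⟨n, rfl⟩ : ∃ n', n = n' + 1 := ⟨n - 1, by omega⟩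
  rw [← conj_thompsonFamily]
  cases m with
  | zero => simp only [thompsonFamily]; group
  | succ m =>
    rw [← conj_eq_of_commute_mul_inv (commute_thompsonFamily h₂ h₃ _ m (by omega))]
    group

end ThompsonFamily

namespace ThompsonMonoid

/-- Normal form of `l * y_j` for a normal form `l`: `y_j` moves left past every `y_a` with
`j < a`, which it turns into `y_{a+d}`. -/
def mulGen (d j : ℕ) : List ℕ → List ℕ
  | [] => [j]
  | a :: l => if a ≤ j then a :: mulGen d j l else j :: (a :: l).map (· + d)

/-- Normal form of `y_a * l` for a normal form `l`. -/
def genMul (d a : ℕ) : List ℕ → List ℕ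
  | [] => [a]
  | b :: l => if b < a then b :: genMul d (a + d) l else a :: b :: l

def mulList (d : ℕ) (l w : List ℕ) : List ℕ := w.foldl (fun acc j => mulGen d j acc) l

variable {d : ℕ}

section mulGen

variable {j a : ℕ} {l : List ℕ}

lemma mulGen_cons_of_le (h : a ≤ j) : mulGen d j (a :: l) = a :: mulGen d j l := if_pos h

lemma mulGen_cons_of_lt (h : j < a) : mulGen d j (a :: l) = j :: (a :: l).map (· + d) :=
  if_neg (Nat.not_le.mpr h)

lemma length_mulGen : (mulGen d j l).length = l.length + 1 := by
  induction l with
  | nil => rfl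
  | cons a l ih => unfold mulGen; split_ifs <;> simp [ih]

lemma head_mulGen_le : ∀ x ∈ (mulGen d j l).head?, x ≤ j := by
  cases l with
  | nil => simp [mulGen]
  | cons a l => unfold mulGen; split_ifs <;> simp_all

lemma mulGen_injective (d j : ℕ) : Function.Injective (mulGen d j) := by
  intro l₁ l₂ h
  induction l₁ generalizing l₂ with
  | nil =>
    cases l₂ with
    | nil => rfl
    | cons => simpa [length_mulGen] using congrArg List.length h
  | cons a l₁ ih =>
    cases l₂ with
    | nil => simpa [length_mulGen] using congrArg List.length h
    | cons b l₂ =>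
      unfold mulGen at h
      split_ifs at h with ha hb hb
      · rw [List.cons.injEq] at h
        rw [h.1, ih h.2]
      · rw [List.cons.injEq] at h
        have := head_mulGen_le (d := d) (j := j) (l := l₁) (b + d) (by simp [h.2])
        omega
      · rw [List.cons.injEq] at h
        have := head_mulGen_le (d := d) (j := j) (l := l₂) (a + d) (by simp [← h.2])
        omega
      · exact List.map_injective_iff.mpr (fun _ _ => by simp) (List.cons.inj h).2

lemma mem_mulGen {x : ℕ} (hx : x ∈ mulGen d j l) : x = j ∨ ∃ c ∈ l, c ≤ x := by
  induction l with
  | nil => simp_all [mulGen]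
  | cons a l ih =>
    unfold mulGen at hx
    split_ifs at hx
    · rcases List.mem_cons.mp hx with rfl | hx
      · exact .inr ⟨x, by simp, le_rfl⟩
      · obtain h | ⟨c, hc, hcx⟩ := ih hx
        · exact .inl h
        · exact .inr ⟨c, List.mem_cons_of_mem _ hc, hcx⟩
    · rcases List.mem_cons.mp hx with rfl | hx
      · exact .inl rfl
      · obtain ⟨c, hc, rfl⟩ := List.mem_map.mp hx
        exact .inr ⟨c, hc, by omega⟩

lemma pairwise_mulGen (hl : l.Pairwise (· ≤ ·)) : (mulGen d j l).Pairwise (· ≤ ·) := by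
  induction l with
  | nil => simp [mulGen]
  | cons a l ih =>
    obtain ⟨ha, hl⟩ := List.pairwise_cons.mp hl
    unfold mulGen
    split_ifs with haj
    · refine List.pairwise_cons.mpr ⟨fun x hx => ?_, ih hl⟩
      obtain rfl | ⟨c, hc, hcx⟩ := mem_mulGen hx
      exacts [haj, (ha c hc).trans hcx]
    · refine List.pairwise_cons.mpr ⟨?_, List.pairwise_map.mpr (hl.cons ha |>.imp (by omega))⟩
      simp only [List.mem_map, List.mem_cons]
      rintro _ ⟨c, rfl | hc, rfl⟩
      · omega
      · have := ha c hc; omega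

lemma map_add_mulGen : (mulGen d j l).map (· + d) = mulGen d (j + d) (l.map (· + d)) := by
  induction l with
  | nil => rfl
  | cons a l ih =>
    by_cases h : a ≤ j
    · rw [mulGen_cons_of_le h, List.map_cons, ih, List.map_cons,
        mulGen_cons_of_le (by omega)]
    · rw [mulGen_cons_of_lt (by omega), List.map_cons, List.map_cons,
        mulGen_cons_of_lt (by omega)]

lemma mulGen_mulGen_of_lt {m n : ℕ} (h : m < n) (l : List ℕ) :
    mulGen d m (mulGen d n l) = mulGen d (n + d) (mulGen d m l) := by
  induction l with
  | nil => simp [mulGen, Nat.not_le.mpr h, show m ≤ n + d by omega]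
  | cons a l ih =>
    rcases le_or_gt a m with h₁ | h₁
    · rw [mulGen_cons_of_le (by omega), mulGen_cons_of_le h₁, mulGen_cons_of_le h₁,
        mulGen_cons_of_le (by omega), ih]
    rcases le_or_gt a n with h₂ | h₂
    · rw [mulGen_cons_of_le h₂, mulGen_cons_of_lt h₁, mulGen_cons_of_lt h₁, List.map_cons,
        List.map_cons, map_add_mulGen, mulGen_cons_of_le (by omega), mulGen_cons_of_le (by omega)]
    · rw [mulGen_cons_of_lt h₂, mulGen_cons_of_lt h, mulGen_cons_of_lt h₁,
        mulGen_cons_of_le (by omega : m ≤ n + d), List.map_cons (a := a),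
        mulGen_cons_of_lt (by omega : n + d < a + d)]
      simp

end mulGen

lemma mulList_cons (j : ℕ) (l w : List ℕ) : mulList d l (j :: w) = mulList d (mulGen d j l) w :=
  rfl

lemma pairwise_mulList {l : List ℕ} (hl : l.Pairwise (· ≤ ·)) (w : List ℕ) :
    (mulList d l w).Pairwise (· ≤ ·) := by
  induction w generalizing l with
  | nil => exact hl
  | cons j w ih => exact ih (pairwise_mulGen hl)

lemma mulGen_of_forall_lt {j : ℕ} {l : List ℕ} (h : ∀ b ∈ l, j < b) :
    mulGen d j l = j :: l.map (· + d) := by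
  cases l with
  | nil => rfl
  | cons a l => exact mulGen_cons_of_lt (h a (by simp))

lemma mulGen_mulList {j : ℕ} {v : List ℕ} (hv : v.Pairwise (· ≤ ·)) (u : List ℕ) :
    mulGen d j (mulList d u v) = mulList d u (mulGen d j v) := by
  induction v generalizing u with
  | nil => rfl
  | cons a v ih =>
    obtain ⟨ha, hv⟩ := List.pairwise_cons.mp hv
    rcases le_or_gt a j with haj | hja
    · rw [mulGen_cons_of_le haj, mulList_cons, mulList_cons, ih hv]
    · have hv_gt : ∀ b ∈ v, j < b := fun b hb => hja.trans_le (ha b hb)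
      rw [mulGen_cons_of_lt hja, mulList_cons, ih hv, mulGen_of_forall_lt hv_gt, mulList_cons,
        mulGen_mulGen_of_lt hja, List.map_cons, mulList_cons, mulList_cons]

lemma mulList_assoc (u : List ℕ) {v : List ℕ} (hv : v.Pairwise (· ≤ ·)) (w : List ℕ) :
    mulList d (mulList d u v) w = mulList d u (mulList d v w) := by
  induction w generalizing v with
  | nil => rfl
  | cons j w ih =>
    rw [mulList_cons, mulList_cons, mulGen_mulList hv, ih (pairwise_mulGen hv)]

lemma mulList_cons_left {b : ℕ} {w : List ℕ} (h : ∀ j ∈ w, b ≤ j) (l : List ℕ) :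
    mulList d (b :: l) w = b :: mulList d l w := by
  induction w generalizing l with
  | nil => rfl
  | cons j w ih =>
    rw [mulList_cons, mulGen_cons_of_le (h j (by simp)), ih (fun x hx => h x (by simp [hx])),
      mulList_cons]

lemma nil_mulList {v : List ℕ} (hv : v.Pairwise (· ≤ ·)) : mulList d [] v = v := by
  induction v with
  | nil => rfl
  | cons b v ih =>
    obtain ⟨hb, hv⟩ := List.pairwise_cons.mp hv
    rw [mulList_cons, mulGen, mulList_cons_left hb, ih hv]

lemma singleton_mulList (a : ℕ) {v : List ℕ} (hv : v.Pairwise (· ≤ ·)) :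
    mulList d [a] v = genMul d a v := by
  induction v generalizing a with
  | nil => rfl
  | cons b v ih =>
    obtain ⟨hb, hv⟩ := List.pairwise_cons.mp hv
    rw [mulList_cons, genMul]
    split_ifs with hba
    · rw [mulGen_cons_of_lt hba, List.map_cons, List.map_nil, mulList_cons_left hb, ih _ hv]
    · rw [mulGen_cons_of_le (Nat.not_lt.mp hba), mulList_cons_left (fun j hj => by
        have := hb j hj; omega), mulGen, mulList_cons_left hb, nil_mulList hv]

lemma length_genMul (a : ℕ) (l : List ℕ) : (genMul d a l).length = l.length + 1 := by
  induction l generalizing a with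
  | nil => rfl
  | cons b l ih => unfold genMul; split_ifs <;> simp [ih]

lemma genMul_injective (d a : ℕ) : Function.Injective (genMul d a) := by
  intro l₁ l₂ h
  induction l₁ generalizing a l₂ with
  | nil =>
    cases l₂ with
    | nil => rfl
    | cons => simpa [length_genMul] using congrArg List.length h
  | cons b l₁ ih =>
    cases l₂ with
    | nil => simpa [length_genMul] using congrArg List.length h
    | cons c l₂ =>
      unfold genMul at h
      split_ifs at h with hb hc hc <;> simp only [List.cons.injEq] at h
      · rw [h.1, ih _ h.2]
      · omega
      · omega
      · rw [h.2.1, h.2.2]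

end ThompsonMonoid

/-- The positive monoid of `F_{d+1}`, realised on its normal forms `y_{i₁} ⋯ y_{iₖ}`,
`i₁ ≤ ⋯ ≤ iₖ`. -/
@[ext]
structure ThompsonMonoid (d : ℕ) where
  toList : List ℕ
  pairwise : toList.Pairwise (· ≤ ·)

namespace ThompsonMonoid

variable {d : ℕ}

instance : Monoid (ThompsonMonoid d) where
  mul a b := ⟨mulList d a.toList b.toList, pairwise_mulList a.pairwise b.toList⟩
  one := ⟨[], .nil⟩
  mul_assoc a b c := ThompsonMonoid.ext (mulList_assoc a.toList b.pairwise c.toList)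
  one_mul a := ThompsonMonoid.ext (nil_mulList a.pairwise)
  mul_one _ := rfl

@[simp]
lemma toList_mul (a b : ThompsonMonoid d) : (a * b).toList = mulList d a.toList b.toList := rfl

def single (n : ℕ) : ThompsonMonoid d := ⟨[n], List.pairwise_singleton _ n⟩

lemma isThompsonFamily_single : IsThompsonFamily d (single (d := d)) := fun m n h =>
  ThompsonMonoid.ext <| by simp [single, mulList, mulGen, Nat.not_le.mpr h, h.le.trans]

lemma mk_cons {b : ℕ} {t : List ℕ} (h : (b :: t).Pairwise (· ≤ ·)) :
    (⟨b :: t, h⟩ : ThompsonMonoid d) = single b * ⟨t, h.of_cons⟩ :=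
  ThompsonMonoid.ext <| by
    rw [toList_mul, single, mulList_cons_left (List.pairwise_cons.mp h).1, nil_mulList h.of_cons]

lemma prod_map_single (l : List ℕ) (hl : l.Pairwise (· ≤ ·)) :
    (l.map single).prod = (⟨l, hl⟩ : ThompsonMonoid d) := by
  induction l with
  | nil => rfl
  | cons b t ih => rw [List.map_cons, List.prod_cons, ih hl.of_cons, mk_cons]

@[elab_as_elim]
lemma induction_on {p : ThompsonMonoid d → Prop} (a : ThompsonMonoid d) (one : p 1)
    (single_mul : ∀ b t, p t → p (single b * t)) : p a := by
  obtain ⟨l, hl⟩ := a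
  rw [← prod_map_single l hl]
  clear hl
  induction l with
  | nil => exact one
  | cons b t ih => exact single_mul b _ ih

lemma hom_ext {N : Type*} [Monoid N] {f g : ThompsonMonoid d →* N}
    (h : ∀ n, f (single n) = g (single n)) : f = g :=
  MonoidHom.ext fun a => induction_on a (by simp) fun b t ht => by simp [h, ht]

section lift

variable {N : Type*} [Monoid N] {x : ℕ → N}

lemma prod_map_shift (hx : IsThompsonFamily d x) {j : ℕ} {l : List ℕ} (h : ∀ b ∈ l, j < b) :
    (l.map x).prod * x j = x j * ((l.map (· + d)).map x).prod := by
  induction l with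
  | nil => simp
  | cons b l ih =>
    simp only [List.map_cons, List.prod_cons, mul_assoc]
    rw [ih fun c hc => h c (by simp [hc]), ← mul_assoc, hx (h b (by simp)), mul_assoc]

lemma prod_map_mulGen (hx : IsThompsonFamily d x) (j : ℕ) {l : List ℕ}
    (hl : l.Pairwise (· ≤ ·)) : ((mulGen d j l).map x).prod = (l.map x).prod * x j := by
  induction l with
  | nil => simp [mulGen]
  | cons a l ih =>
    obtain ⟨ha, hl⟩ := List.pairwise_cons.mp hl
    rcases le_or_gt a j with haj | hja
    · rw [mulGen_cons_of_le haj, List.map_cons, List.prod_cons, ih hl, List.map_cons,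
        List.prod_cons, mul_assoc]
    · rw [mulGen_cons_of_lt hja, List.map_cons, List.prod_cons, prod_map_shift hx]
      intro b hb
      rcases List.mem_cons.mp hb with rfl | hb
      exacts [hja, hja.trans_le (ha b hb)]

lemma prod_map_mulList (hx : IsThompsonFamily d x) {l : List ℕ} (hl : l.Pairwise (· ≤ ·))
    (w : List ℕ) : ((mulList d l w).map x).prod = (l.map x).prod * (w.map x).prod := by
  induction w generalizing l with
  | nil => simp [mulList]
  | cons j w ih =>
    rw [mulList_cons, ih (pairwise_mulGen hl), prod_map_mulGen hx j hl, List.map_cons,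
      List.prod_cons, mul_assoc]

def lift (x : ℕ → N) (hx : IsThompsonFamily d x) : ThompsonMonoid d →* N where
  toFun a := (a.toList.map x).prod
  map_one' := rfl
  map_mul' a b := prod_map_mulList hx a.pairwise b.toList

@[simp]
lemma lift_single (hx : IsThompsonFamily d x) (n : ℕ) : lift x hx (single n) = x n :=
  mul_one (x n)

end lift

lemma isLeftRegular_single (a : ℕ) : IsLeftRegular (single a : ThompsonMonoid d) := by
  intro v w h
  have h' := congrArg toList h
  simp only [toList_mul, single, singleton_mulList a v.pairwise,
    singleton_mulList a w.pairwise] at h'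
  exact ThompsonMonoid.ext (genMul_injective d a h')

lemma isRightRegular_single (j : ℕ) : IsRightRegular (single j : ThompsonMonoid d) :=
  fun _ _ h => ThompsonMonoid.ext (mulGen_injective d j (congrArg toList h))

lemma isRegular (a : ThompsonMonoid d) : IsRegular a :=
  induction_on a isRegular_one fun b _ ht =>
    ⟨(isLeftRegular_single b).mul ht.left, (isRightRegular_single b).mul ht.right⟩

instance : CancelMonoid (ThompsonMonoid d) where
  mul_left_cancel a := (isRegular a).left
  mul_right_cancel a := (isRegular a).right

lemma exists_single_mul_eq_mul (j : ℕ) (u : ThompsonMonoid d) :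
    ∃ v w, single j * v = u * w := by
  induction u using induction_on generalizing j with
  | one => exact ⟨1, single j, by simp⟩
  | single_mul b t ih =>
    rcases lt_trichotomy j b with hjb | rfl | hbj
    · obtain ⟨v, w, h⟩ := ih j
      refine ⟨single (b + d) * v, w, ?_⟩
      rw [← mul_assoc, ← isThompsonFamily_single hjb, mul_assoc, h, mul_assoc]
    · exact ⟨t, 1, by simp⟩
    · obtain ⟨v, w, h⟩ := ih (j + d)
      refine ⟨single b * v, w, ?_⟩
      rw [← mul_assoc, isThompsonFamily_single hbj, mul_assoc, h, mul_assoc]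

lemma exists_mul_eq_mul (u s : ThompsonMonoid d) : ∃ a b, u * a = s * b := by
  induction s using induction_on generalizing u with
  | one => exact ⟨1, u, by simp⟩
  | single_mul j t ih =>
    obtain ⟨v, w, hvw⟩ := exists_single_mul_eq_mul j u
    obtain ⟨c, e, hce⟩ := ih v
    exact ⟨w * c, e, by rw [← mul_assoc, ← hvw, mul_assoc, hce, mul_assoc]⟩

noncomputable instance : OreSet (⊤ : Submonoid (ThompsonMonoid d)ᵐᵒᵖ) :=
  oreSetTop fun r s => by
    obtain ⟨a, b, h⟩ := exists_mul_eq_mul (unop r) (unop s)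
    exact ⟨op b, op a, unop_injective h⟩

/-- Mathlib's Ore localisation is by left fractions `s⁻¹ r`, whence the opposites. -/
abbrev FracGroup (d : ℕ) : Type :=
  (OreLocalization (⊤ : Submonoid (ThompsonMonoid d)ᵐᵒᵖ) (ThompsonMonoid d)ᵐᵒᵖ)ˣᵐᵒᵖ

noncomputable def toFracGroup : ThompsonMonoid d →* FracGroup d :=
  (MonoidHom.op (Units.liftRight numeratorHom (fun r => numeratorUnit ⟨r, Submonoid.mem_top r⟩)
    fun _ => rfl)).comp (MulEquiv.opOp _).toMonoidHom

lemma toFracGroup_injective : Function.Injective (toFracGroup (d := d)) := fun _ _ h =>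
  op_injective <| numeratorHom_injective _ (congrArg (fun u => (unop u : _ˣ).val) h)

variable {k : ℕ}

lemma isThompsonFamily_single_mul (hk : 0 < k) :
    IsThompsonFamily d fun n => (single (k * n) : ThompsonMonoid (k * d)) := fun m n h => by
  simp only [Nat.mul_add, isThompsonFamily_single (Nat.mul_lt_mul_of_pos_left h hk)]

def scale (hk : 0 < k) : ThompsonMonoid d →* ThompsonMonoid (k * d) :=
  lift _ (isThompsonFamily_single_mul hk)

lemma scale_injective (hk : 0 < k) : Function.Injective (scale (d := d) hk) := by
  have hscale (a : ThompsonMonoid d) : (scale hk a).toList = a.toList.map (k * ·) := by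
    have hsorted := List.pairwise_map.mpr (a.pairwise.imp fun h => Nat.mul_le_mul_left k h)
    change ((a.toList.map ((single : ℕ → ThompsonMonoid (k * d)) ∘ (k * ·))).prod).toList = _
    rw [← List.map_map, prod_map_single _ hsorted]
  intro a b h
  have := congrArg toList h
  rw [hscale, hscale] at this
  exact ThompsonMonoid.ext (List.map_injective_iff.mpr (fun _ _ => by simp [hk.ne']) this)

end ThompsonMonoid

lemma IsThompsonFamily.lift_eq_one_of_mem_relsF {G : Type*} [Group G] {x : ℕ → G}
    (hx : IsThompsonFamily 1 x) : ∀ r ∈ relsF, FreeGroup.lift (fun i : Fin 2 => x i) r = 1 := by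
  have hconj (n : ℕ) : (x 0)⁻¹ * x (n + 1) * x 0 = x (n + 2) := by
    rw [mul_assoc, hx n.succ_pos, inv_mul_cancel_left]
  have h₂ : (x 0)⁻¹ * x 1 * x 0 = x 2 := hconj 0
  have h₃ : (x 0)⁻¹ * (x 0)⁻¹ * x 1 * x 0 * x 0 = x 3 := by
    rw [← hconj 1, ← h₂]
    group
  simp only [relsF, Set.mem_insert_iff, Set.mem_singleton_iff]
  rintro r (rfl | rfl) <;>
    simp only [map_commutatorElement, map_mul, map_inv, FreeGroup.lift_apply_of, Fin.val_zero,
      Fin.val_one, commutatorElement_eq_one_iff_commute]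
  · rw [h₂]
    exact hx.commute_mul_inv le_rfl
  · rw [h₃]
    exact hx.commute_mul_inv (by norm_num)

namespace BrownThompson

lemma isThompsonFamily_of : IsThompsonFamily 2 (PresentedGroup.of : ℕ → PresentedGroup relsF3) :=
  fun m n h => by
    have := PresentedGroup.one_of_mem (rels := relsF3) ⟨m, n, h, rfl⟩
    rwa [map_mul, map_inv, mul_inv_eq_one, map_mul, map_mul] at this

def lift {G : Type*} [Group G] (x : ℕ → G) (hx : IsThompsonFamily 2 x) :
    PresentedGroup relsF3 →* G :=
  PresentedGroup.toGroup (f := x) <| by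
    rintro _ ⟨m, n, h, rfl⟩
    simp only [map_mul, map_inv, FreeGroup.lift_apply_of]
    rw [mul_inv_eq_one, hx h]

@[simp]
lemma lift_of {G : Type*} [Group G] {x : ℕ → G} (hx : IsThompsonFamily 2 x) (n : ℕ) :
    lift x hx (.of n) = x n :=
  PresentedGroup.toGroup.of _

lemma injective_lift_of :
    Function.Injective (ThompsonMonoid.lift _ isThompsonFamily_of) := by
  let ι := lift _ (ThompsonMonoid.isThompsonFamily_single.map ThompsonMonoid.toFracGroup)
  have h : ι.comp (ThompsonMonoid.lift _ isThompsonFamily_of) = ThompsonMonoid.toFracGroup :=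
    ThompsonMonoid.hom_ext fun n => by simp [ι]
  refine Function.Injective.of_comp (f := ι) ?_
  rw [← MonoidHom.coe_comp, h]
  exact ThompsonMonoid.toFracGroup_injective

end BrownThompson

namespace Thompson

abbrev gen : ℕ → PresentedGroup relsF := thompsonFamily (.of 0) (.of 1)

lemma isThompsonFamily_gen : IsThompsonFamily 1 gen := by
  have h₂ := PresentedGroup.one_of_mem (rels := relsF) (Set.mem_insert _ _)
  have h₃ := PresentedGroup.one_of_mem (rels := relsF) (Set.mem_insert_of_mem _ rfl)
  simp only [map_commutatorElement, map_mul, map_inv, commutatorElement_eq_one_iff_commute]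
    at h₂ h₃
  exact isThompsonFamily_thompsonFamily h₂ h₃

lemma closure_range_lift_gen :
    Subgroup.closure (Set.range (ThompsonMonoid.lift gen isThompsonFamily_gen)) = ⊤ := by
  rw [eq_top_iff, ← PresentedGroup.closure_range_of]
  refine Subgroup.closure_mono ?_
  rintro _ ⟨i, rfl⟩
  refine ⟨ThompsonMonoid.single i, ?_⟩
  fin_cases i <;> simp [thompsonFamily]

end Thompson

/-- the assignment `x₀ ↦ y₀`, `x₁ ↦ y₂` extends to a well-defined
injective group homomorphism from Thompson's group `F` to the Brown–Thompson
group `F₃`. -/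
theorem F_embeds_in_F3 :
    ∃ h : PresentedGroup relsF →* PresentedGroup relsF3,
      Function.Injective h ∧
      h (PresentedGroup.of 0) = PresentedGroup.of 0 ∧
      h (PresentedGroup.of 1) = PresentedGroup.of 2 := by
  have hy : IsThompsonFamily 1 fun n => (PresentedGroup.of (2 * n) : PresentedGroup relsF3) :=
    fun m n h => by
      simpa [Nat.mul_add] using BrownThompson.isThompsonFamily_of (by omega : 2 * m < 2 * n)
  let φ := PresentedGroup.toGroup hy.lift_eq_one_of_mem_relsF
  have hφ : φ.comp (ThompsonMonoid.lift _ Thompson.isThompsonFamily_gen) =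
      (ThompsonMonoid.lift _ BrownThompson.isThompsonFamily_of).comp
        (ThompsonMonoid.scale two_pos) := by
    refine ThompsonMonoid.hom_ext fun n => ?_
    simpa [φ, ThompsonMonoid.scale, map_thompsonFamily] using congrFun hy.thompsonFamily_eq n
  refine ⟨φ, ?_, PresentedGroup.toGroup.of _, PresentedGroup.toGroup.of _⟩
  refine MonoidHom.injective_of_injective_comp ThompsonMonoid.exists_mul_eq_mul
    Thompson.closure_range_lift_gen φ ?_
  rw [hφ, MonoidHom.coe_comp]
  exact BrownThompson.injective_lift_of.comp (ThompsonMonoid.scale_injective two_pos)
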